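/- Let P_{n,m} be a necklace chain with n link states and m beads of type B. Let X_1, X_2, … be i.i.d. random variables distributed as the first passage time from 0 to b in B, and set S_j = X_1 + ⋯ + X_j. If s_{i,k} is a state in a bead at position i with i ≠ 0 (so r_i = 1 and 0 ≤ k ≤ b−1), then for every t ≥ 0, P_{n,m}^t(s_0, s_{i,k}) = Σ_{a ≥ 0} B^a(0,k) · Σ_{j ≥ 0} P[S_{mj+R_i} = t − a − i + R_i − (n−m)j], where B^a(0,k) denotes the (0,k) entry of the a-th matrix power of the transition matrix of B. -/

import Mathlib

open Matrix

/-- A row-stochastic matrix. -/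
def RowStochastic {S : Type*} [Fintype S] (P : Matrix S S ℝ) : Prop :=
  (∀ i j, 0 ≤ P i j) ∧ ∀ i, ∑ j, P i j = 1

/-- `fpt b P t` is the probability that the first passage time from state `0` to the
absorbing state `b` (i.e. `Fin.last b`) equals `t`. -/
noncomputable def fpt (b : ℕ) (P : Matrix (Fin (b + 1)) (Fin (b + 1)) ℝ) : ℕ → ℝ
  | 0 => 0
  | t + 1 => (P ^ (t + 1)) 0 (Fin.last b) - (P ^ t) 0 (Fin.last b)

/-- A bead: a chain on `{0,…,b}` whose only absorbing state is `b`, in which every state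
lies on a path from `0` to `b`, and whose first passage time distribution from `0` to `b`
has minimal span `1`. -/
def IsBead (b : ℕ) (P : Matrix (Fin (b + 1)) (Fin (b + 1)) ℝ) : Prop :=
  RowStochastic P ∧
  (∀ j, P (Fin.last b) j = if j = Fin.last b then 1 else 0) ∧
  (∀ i, P i i = 1 → i = Fin.last b) ∧
  (∀ i, (∃ t, 0 < (P ^ t) 0 i) ∧ (∃ t, 0 < (P ^ t) i (Fin.last b))) ∧
  (∀ d : ℕ, 0 < d →
    (∀ t₁ t₂ : ℕ, fpt b P t₁ ≠ 0 → fpt b P t₂ ≠ 0 → (d : ℤ) ∣ ((t₂ : ℤ) - (t₁ : ℤ))) →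
    d = 1)

/-- `π` is a stationary distribution of the chain `P`. -/
def IsStationaryDist {S : Type*} [Fintype S] (P : Matrix S S ℝ) (π : S → ℝ) : Prop :=
  (∀ s, 0 ≤ π s) ∧ (∑ s, π s = 1) ∧ ∀ s', ∑ s, π s * P s s' = π s'

/-- `Rcount r i = R_i = Σ_{k<i} r_k`, the number of beads among positions `0,…,i−1`. -/
def Rcount (r : ℕ → Bool) (i : ℕ) : ℕ :=
  ((Finset.range i).filter fun k => r k = true).card

/-- The necklace chain built with bead `B` (on `{0,…,b}`) and indicator vector
`r : {0,…,n−1} → {0,1}`.  Its states are pairs `(i,k)` with `i` a position (`Fin n`) and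
`k < b`: `(i,0)` is the link state `s_i`, and when `r i = 1` the states `(i,k)`,
`0 ≤ k ≤ b−1`, are the states of the bead at position `i`, whose exit `s_{i,b}` is
identified with `s_{i+1} = (i+1 mod n, 0)`.  When `r i = 0` the link state `s_i` moves
deterministically to `s_{i+1}` (and the unused states `(i,k)`, `k ≥ 1`, are junk states
that also move to `s_{i+1}`; no state ever moves into them). -/
noncomputable def necklace (n b : ℕ) (B : Matrix (Fin (b + 1)) (Fin (b + 1)) ℝ)
    (r : ℕ → Bool) : Matrix (Fin n × Fin b) (Fin n × Fin b) ℝ :=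
  Matrix.of fun s s' =>
    if r s.1.val then
      (if s'.1 = s.1 then B s.2.castSucc s'.2.castSucc else 0) +
      (if s'.1.val = (s.1.val + 1) % n ∧ s'.2.val = 0 then B s.2.castSucc (Fin.last b)
        else 0)
    else
      if s'.1.val = (s.1.val + 1) % n ∧ s'.2.val = 0 then 1 else 0

/-- `convPow f j a = P[S_j = a]` where `S_j = X_1 + ⋯ + X_j` is a sum of `j` i.i.d.
random variables with common distribution `f` on `ℕ`; by convention
`P[S_0 = a] = 1` iff `a = 0`. -/
def convPow (f : ℕ → ℝ) : ℕ → ℕ → ℝ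
  | 0, a => if a = 0 then 1 else 0
  | j + 1, a => ∑ k ∈ Finset.range (a + 1), convPow f j k * f (a - k)

/-- `P[S_j = a]` for an integer argument `a` (zero for negative `a`). -/
def probZ (f : ℕ → ℝ) (j : ℕ) (a : ℤ) : ℝ :=
  if 0 ≤ a then convPow f j a.toNat else 0

/-!
Unwrap the necklace onto `ℕ`, crossing link `q` through a bead when `r (q % n)` holds. The
unwrapped walk arrives at `q` at time `u` when its `R_q` bead crossings take `u - (q - R_q)` steps
in total, and the lifts of `s_i` are the `q = n j + i`, with `R_q = m j + R_i`: this is the inner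
sum. The law of the chain started at `s₀` is then identified through the forward equation
`μ_{t+1} = μ_t P`: the link `s_i` is entered from the bead before it (a convolution with `f`) or
from a plain link (a shift by one step).
-/

open Finset

section ConvolutionPowers

variable {f : ℕ → ℝ}

lemma convPow_eq_zero_of_lt (hf : f 0 = 0) {j w : ℕ} (hw : w < j) : convPow f j w = 0 := by
  induction j generalizing w with
  | zero => omega
  | succ j ih =>
    refine sum_eq_zero fun k hk => ?_
    rcases lt_or_ge k j with hkj | hkj
    · rw [ih hkj, zero_mul]
    · rw [mem_range] at hk
      rw [Nat.sub_eq_zero_of_le (by omega), hf, mul_zero]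

lemma convPow_succ_succ (hf : f 0 = 0) (j v : ℕ) :
    convPow f (j + 1) (v + 1) = ∑ a ∈ range (v + 1), f (a + 1) * convPow f j (v - a) := by
  rw [convPow, sum_range_succ, Nat.sub_self, hf, mul_zero, add_zero, ← sum_range_reflect]
  refine sum_congr rfl fun a ha => ?_
  rw [mem_range] at ha
  rw [mul_comm]
  congr 2
  omega

lemma probZ_natCast (j v : ℕ) : probZ f j v = convPow f j v := by
  simp [probZ]

lemma probZ_eq_zero_of_lt (hf : f 0 = 0) {j : ℕ} {w : ℤ} (hw : w < j) : probZ f j w = 0 := by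
  unfold probZ
  split_ifs
  · exact convPow_eq_zero_of_lt hf (by omega)
  · rfl

lemma probZ_succ_add_one (hf : f 0 = 0) (j : ℕ) {w : ℤ} {N : ℕ} (hN : w < N) :
    probZ f (j + 1) (w + 1) = ∑ a ∈ range N, f (a + 1) * probZ f j (w - a) := by
  rcases lt_or_ge w 0 with hw | hw
  · rw [probZ_eq_zero_of_lt hf (by omega)]
    exact (sum_eq_zero fun a _ => by rw [probZ_eq_zero_of_lt hf (by omega), mul_zero]).symm
  lift w to ℕ using hw
  have hvanish : ∀ a ∈ Ico (w + 1) N, f (a + 1) * probZ f j ((w : ℤ) - a) = 0 := fun a ha => by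
    rw [mem_Ico] at ha
    rw [probZ_eq_zero_of_lt hf (by omega), mul_zero]
  rw [← sum_range_add_sum_Ico _ (show w + 1 ≤ N by omega), sum_eq_zero hvanish, add_zero,
    ← Nat.cast_succ, probZ_natCast, convPow_succ_succ hf]
  refine sum_congr rfl fun a ha => ?_
  rw [mem_range] at ha
  rw [← Nat.cast_sub (by omega), probZ_natCast]

end ConvolutionPowers

section Counting

lemma Rcount_eq_count (c : ℕ → Bool) (p : ℕ) : Rcount c p = Nat.count (fun q => c q) p := by
  rw [Nat.count_eq_card_filter_range]
  rfl

lemma Rcount_le (c : ℕ → Bool) (p : ℕ) : Rcount c p ≤ p := by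
  rw [Rcount_eq_count]
  exact Nat.count_le _

lemma Rcount_succ (c : ℕ → Bool) (p : ℕ) :
    Rcount c (p + 1) = Rcount c p + if c p then 1 else 0 := by
  simp only [Rcount_eq_count, Nat.count_succ]

lemma Rcount_mod_add {r : ℕ → Bool} {n j : ℕ}
    (hbase : Rcount (fun q => r (q % n)) (n * j) = Rcount r n * j) {i : ℕ} (hi : i ≤ n) :
    Rcount (fun q => r (q % n)) (n * j + i) = Rcount r n * j + Rcount r i := by
  induction i with
  | zero => exact hbase
  | succ i ih =>
    rw [← add_assoc, Rcount_succ, ih (by omega), Rcount_succ, Nat.mul_add_mod,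
      Nat.mod_eq_of_lt (by omega), add_assoc]

lemma Rcount_mod (r : ℕ → Bool) {n i : ℕ} (hi : i ≤ n) (j : ℕ) :
    Rcount (fun q => r (q % n)) (n * j + i) = Rcount r n * j + Rcount r i := by
  induction j generalizing i with
  | zero => exact Rcount_mod_add (by simp [Rcount]) hi
  | succ j ih => exact Rcount_mod_add (by rw [mul_add_one, ih le_rfl, mul_add_one]) hi

end Counting

section Arrival

variable {f : ℕ → ℝ}

/-- Probability that the walk on `ℕ` crossing `q → q + 1` in one step when `c q = false`, and in
a time distributed as `f` when `c q = true`, arrives at `p` at time `u`. -/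
noncomputable def walkArrival (f : ℕ → ℝ) (c : ℕ → Bool) (p : ℕ) (u : ℤ) : ℝ :=
  probZ f (Rcount c p) (u - p + Rcount c p)

variable {c : ℕ → Bool}

lemma walkArrival_eq_zero_of_lt (hf : f 0 = 0) {p : ℕ} {u : ℤ} (hu : u < p) :
    walkArrival f c p u = 0 :=
  probZ_eq_zero_of_lt hf (by omega)

lemma walkArrival_zero_left (u : ℤ) :
    walkArrival f c 0 u = if u = 0 then 1 else 0 := by
  have hR : Rcount c 0 = 0 := rfl
  simp only [walkArrival, hR, probZ, convPow]
  split_ifs <;> first | rfl | omega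

lemma walkArrival_zero_right (hf : f 0 = 0) (p : ℕ) :
    walkArrival f c p 0 = if p = 0 then 1 else 0 := by
  rcases Nat.eq_zero_or_pos p with rfl | hp
  · simp [walkArrival_zero_left]
  · rw [walkArrival_eq_zero_of_lt hf (by exact_mod_cast hp), if_neg hp.ne']

lemma walkArrival_succ_of_false {p : ℕ} (hc : c p = false) (u : ℤ) :
    walkArrival f c (p + 1) u = walkArrival f c p (u - 1) := by
  simp only [walkArrival, Rcount_succ, hc]
  congr 1
  push_cast
  ring

lemma walkArrival_succ_of_true (hf : f 0 = 0) {p : ℕ} (hc : c p = true) {u : ℤ} {N : ℕ}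
    (hN : u ≤ N) :
    walkArrival f c (p + 1) u = ∑ a ∈ range N, f (a + 1) * walkArrival f c p (u - 1 - a) := by
  have hR : (Rcount c p : ℤ) ≤ p := by exact_mod_cast Rcount_le c p
  have hterm : ∀ a : ℕ, walkArrival f c p (u - 1 - a) =
      probZ f (Rcount c p) ((u - p + Rcount c p - 1) - a) := fun a => by
    rw [walkArrival]
    ring_nf
  rw [sum_congr rfl fun a _ => by rw [hterm], ← probZ_succ_add_one hf _ (by omega), walkArrival,
    Rcount_succ, if_pos hc]
  push_cast
  ring_nf

end Arrival

section NecklaceArrival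

variable {f : ℕ → ℝ} {n : ℕ} {r : ℕ → Bool}

lemma succ_mod_eq_succ_mod_iff {p : ℕ} (hp : p < n) (q : ℕ) :
    (q + 1) % n = (p + 1) % n ↔ q % n = p := by
  conv_rhs => rw [← Nat.mod_eq_of_lt hp]
  exact ⟨Nat.ModEq.add_right_cancel' 1, Nat.ModEq.add_right 1⟩

noncomputable def necklaceArrival (f : ℕ → ℝ) (n : ℕ) (r : ℕ → Bool) (i : ℕ) (u : ℤ) : ℝ :=
  ∑' q, if q % n = i then walkArrival f (fun q => r (q % n)) q u else 0

lemma summable_walkArrival_mod (hf : f 0 = 0) (c : ℕ → Bool) (i : ℕ) (u : ℤ) :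
    Summable fun q => if q % n = i then walkArrival f c q u else 0 := by
  refine summable_of_ne_finset_zero (s := range (u.toNat + 1)) fun q hq => ?_
  rw [mem_range, not_lt] at hq
  rw [walkArrival_eq_zero_of_lt hf (by omega), ite_self]

lemma necklaceArrival_of_neg (hf : f 0 = 0) (i : ℕ) {u : ℤ} (hu : u < 0) :
    necklaceArrival f n r i u = 0 := by
  refine (tsum_congr fun q => ?_).trans tsum_zero
  rw [walkArrival_eq_zero_of_lt hf (by omega), ite_self]

lemma necklaceArrival_zero_right (hf : f 0 = 0) (i : ℕ) :
    necklaceArrival f n r i 0 = if i = 0 then 1 else 0 := by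
  rw [necklaceArrival, tsum_eq_single 0 fun q hq => by rw [walkArrival_zero_right hf, if_neg hq,
    ite_self], walkArrival_zero_right hf, Nat.zero_mod]
  simp [eq_comm]

lemma necklaceArrival_succ_mod (hf : f 0 = 0) {p : ℕ} (hp : p < n) {u : ℤ} (hu : u ≠ 0) :
    necklaceArrival f n r ((p + 1) % n) u =
      ∑' q, if q % n = p then walkArrival f (fun q => r (q % n)) (q + 1) u else 0 := by
  rw [necklaceArrival, (summable_walkArrival_mod hf _ _ _).tsum_eq_zero_add,
    walkArrival_zero_left, if_neg hu, ite_self, zero_add]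
  simp only [succ_mod_eq_succ_mod_iff hp]

lemma necklaceArrival_succ_of_false (hf : f 0 = 0) {p : ℕ} (hp : p < n) (hrp : r p = false)
    {u : ℤ} (hu : u ≠ 0) :
    necklaceArrival f n r ((p + 1) % n) u = necklaceArrival f n r p (u - 1) := by
  rw [necklaceArrival_succ_mod hf hp hu, necklaceArrival]
  refine tsum_congr fun q => ?_
  split_ifs with hq
  · exact walkArrival_succ_of_false (by rwa [hq]) u
  · rfl

lemma necklaceArrival_succ_of_true (hf : f 0 = 0) {p : ℕ} (hp : p < n) (hrp : r p = true)
    {u : ℤ} (hu : u ≠ 0) {N : ℕ} (hN : u ≤ N) :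
    necklaceArrival f n r ((p + 1) % n) u =
      ∑ a ∈ range N, f (a + 1) * necklaceArrival f n r p (u - 1 - a) := by
  rw [necklaceArrival_succ_mod hf hp hu]
  simp only [necklaceArrival, ← tsum_mul_left]
  rw [← Summable.tsum_finsetSum fun a _ => (summable_walkArrival_mod hf _ _ _).mul_left _]
  refine tsum_congr fun q => ?_
  split_ifs with hq
  · exact walkArrival_succ_of_true hf (by rwa [hq]) hN
  · simp

lemma necklaceArrival_eq_tsum {i : ℕ} (hi : i < n) (u : ℤ) :
    necklaceArrival f n r i u = ∑' j : ℕ, probZ f (Rcount r n * j + Rcount r i)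
      (u - i + Rcount r i - ((n : ℤ) - Rcount r n) * j) := by
  have hlift : Function.Injective fun j => n * j + i := fun j₁ j₂ h =>
    Nat.eq_of_mul_eq_mul_left (by omega) (Nat.add_right_cancel h)
  rw [necklaceArrival, ← hlift.tsum_eq]
  · refine tsum_congr fun j => ?_
    rw [if_pos (by simp [Nat.mod_eq_of_lt hi]), walkArrival,
      Rcount_mod r hi.le]
    congr 1
    push_cast
    ring
  · intro q hq
    rw [Function.mem_support, ne_eq, ite_eq_right_iff, not_forall] at hq
    obtain ⟨hqi, -⟩ := hq
    exact ⟨q / n, by rw [← hqi]; exact Nat.div_add_mod q n⟩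

end NecklaceArrival

section Bead

variable {b : ℕ} {B : Matrix (Fin (b + 1)) (Fin (b + 1)) ℝ}

lemma fpt_zero : fpt b B 0 = 0 := rfl

lemma fpt_succ_eq_sum (hB : ∀ j, B (Fin.last b) j = if j = Fin.last b then 1 else 0) (a : ℕ) :
    fpt b B (a + 1) = ∑ k : Fin b, (B ^ a) 0 k.castSucc * B k.castSucc (Fin.last b) := by
  rw [fpt, pow_succ, Matrix.mul_apply, Fin.sum_univ_castSucc, hB, if_pos rfl, mul_one,
    add_sub_cancel_right]

lemma pow_succ_apply_castSucc (hB : ∀ j, B (Fin.last b) j = if j = Fin.last b then 1 else 0)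
    (a : ℕ) (k : Fin b) :
    (B ^ (a + 1)) 0 k.castSucc = ∑ k' : Fin b, (B ^ a) 0 k'.castSucc * B k'.castSucc k.castSucc := by
  rw [pow_succ, Matrix.mul_apply, Fin.sum_univ_castSucc, hB, if_neg (Fin.castSucc_lt_last k).ne,
    mul_zero, add_zero]

end Bead

section Necklace

variable {n b : ℕ} {B : Matrix (Fin (b + 1)) (Fin (b + 1)) ℝ} {r : ℕ → Bool}

lemma Fin.succ_mod_eq_iff (p q : Fin n) : ((q : ℕ) + 1) % n = ((p : ℕ) + 1) % n ↔ q = p := by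
  rw [succ_mod_eq_succ_mod_iff p.isLt, Nat.mod_eq_of_lt q.isLt, Fin.val_inj]

lemma sum_mul_necklace_apply (μ : Fin n × Fin b → ℝ) {p i : Fin n} (hp : ((p : ℕ) + 1) % n = i)
    (k : Fin b) :
    ∑ y, μ y * necklace n b B r y (i, k) =
      (if r i then ∑ k', μ (i, k') * B k'.castSucc k.castSucc else 0) +
      if (k : ℕ) = 0 then ∑ k', μ (p, k') * (if r p then B k'.castSucc (Fin.last b) else 1)
        else 0 := by
  have hsucc : ∀ q : Fin n, ((i : ℕ) = ((q : ℕ) + 1) % n) ↔ q = p := fun q => by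
    rw [← hp, eq_comm, Fin.succ_mod_eq_iff]
  have hentry : ∀ q k', necklace n b B r (q, k') (i, k) =
      (if q = i then (if r q then B k'.castSucc k.castSucc else 0) else 0) +
      if q = p then (if (k : ℕ) = 0 then (if r q then B k'.castSucc (Fin.last b) else 1) else 0)
        else 0 := by
    intro q k'
    simp only [necklace, Matrix.of_apply, hsucc, @eq_comm _ i q]
    cases r q <;> by_cases hqi : q = i <;> simp [hqi, ite_and]
  simp [Fintype.sum_prod_type, hentry, mul_add, sum_add_distrib, mul_ite]

/-- Started at `s₀`, the chain is at the bead state `s_{i,k}` at time `t` when it arrived at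
`s_i` at some time `t - a` and then moved from `0` to `k` inside the bead in `a` steps. -/
noncomputable def necklaceLaw (n b : ℕ) (B : Matrix (Fin (b + 1)) (Fin (b + 1)) ℝ)
    (r : ℕ → Bool) (t : ℕ) (s : Fin n × Fin b) : ℝ :=
  if r s.1 then
    ∑ a ∈ range (t + 1), (B ^ a) 0 s.2.castSucc * necklaceArrival (fpt b B) n r s.1 ((t : ℤ) - a)
  else if (s.2 : ℕ) = 0 then necklaceArrival (fpt b B) n r s.1 t else 0

lemma necklaceLaw_zero (hn : 0 < n) (hb : 0 < b) (s : Fin n × Fin b) :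
    necklaceLaw n b B r 0 s = if ((⟨0, hn⟩, ⟨0, hb⟩) : Fin n × Fin b) = s then 1 else 0 := by
  obtain ⟨i, k⟩ := s
  simp only [necklaceLaw, zero_add, range_one, CharP.cast_eq_zero, zero_sub, sum_singleton,
    pow_zero, Matrix.one_apply, Fin.ext_iff, Fin.coe_ofNat_eq_mod, Nat.zero_mod, Fin.val_castSucc,
    neg_zero, necklaceArrival_zero_right fpt_zero, mul_ite, mul_one, mul_zero, Prod.ext_iff]
  split_ifs <;> first | rfl | omega

lemma sum_necklaceLaw_mul_castSucc (hB : ∀ j, B (Fin.last b) j = if j = Fin.last b then 1 else 0)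
    {i : Fin n} (hri : r i = true) (t : ℕ) (k : Fin b) :
    ∑ k', necklaceLaw n b B r t (i, k') * B k'.castSucc k.castSucc =
      ∑ a ∈ range (t + 1), (B ^ (a + 1)) 0 k.castSucc * necklaceArrival (fpt b B) n r i (t - a) := by
  simp only [necklaceLaw, hri, if_true, sum_mul]
  rw [sum_comm]
  refine sum_congr rfl fun a _ => ?_
  rw [pow_succ_apply_castSucc hB, sum_mul]
  exact sum_congr rfl fun k' _ => by ring

lemma sum_necklaceLaw_mul_exit (hb : 0 < b)
    (hB : ∀ j, B (Fin.last b) j = if j = Fin.last b then 1 else 0) (p : Fin n) (t : ℕ) :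
    ∑ k', necklaceLaw n b B r t (p, k') * (if r p then B k'.castSucc (Fin.last b) else 1) =
      necklaceArrival (fpt b B) n r ((p + 1) % n) (t + 1) := by
  cases hrp : r p
  · rw [necklaceArrival_succ_of_false fpt_zero p.isLt hrp (by omega), add_sub_cancel_right]
    have hk0 : ∀ k' : Fin b, (k' : ℕ) = 0 ↔ k' = ⟨0, hb⟩ := fun k' => by simp [Fin.ext_iff]
    simp [necklaceLaw, hrp, hk0]
  · simp only [necklaceLaw, hrp, if_true, sum_mul]
    rw [sum_comm, necklaceArrival_succ_of_true fpt_zero p.isLt hrp (N := t + 1) (by omega) (by omega)]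
    refine sum_congr rfl fun a _ => ?_
    rw [fpt_succ_eq_sum hB, sum_mul]
    refine sum_congr rfl fun k' _ => ?_
    rw [add_sub_cancel_right]
    ring

lemma necklaceLaw_succ (hn : 0 < n) (hb : 0 < b)
    (hB : ∀ j, B (Fin.last b) j = if j = Fin.last b then 1 else 0) (t : ℕ) (s : Fin n × Fin b) :
    ∑ y, necklaceLaw n b B r t y * necklace n b B r y s = necklaceLaw n b B r (t + 1) s := by
  obtain ⟨i, k⟩ := s
  let p : Fin n := ⟨(i + (n - 1)) % n, Nat.mod_lt _ hn⟩
  have hp : ((p : ℕ) + 1) % n = i := by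
    rw [Nat.mod_add_mod, show (i : ℕ) + (n - 1) + 1 = i + n by omega, Nat.add_mod_right,
      Nat.mod_eq_of_lt i.isLt]
  rw [sum_mul_necklace_apply _ hp, sum_necklaceLaw_mul_exit hb hB, hp]
  cases hri : r i
  · simp [necklaceLaw, hri]
  · rw [sum_necklaceLaw_mul_castSucc hB hri]
    simp only [necklaceLaw, hri, if_true]
    rw [sum_range_succ' _ (t + 1)]
    congr 1
    · refine sum_congr rfl fun a _ => ?_
      push_cast
      ring_nf
    · rw [pow_zero, Matrix.one_apply]
      simp [Fin.ext_iff, eq_comm]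

lemma necklace_pow_apply (hn : 0 < n) (hb : 0 < b)
    (hB : ∀ j, B (Fin.last b) j = if j = Fin.last b then 1 else 0) (t : ℕ) (s : Fin n × Fin b) :
    (necklace n b B r ^ t) (⟨0, hn⟩, ⟨0, hb⟩) s = necklaceLaw n b B r t s := by
  induction t generalizing s with
  | zero => rw [pow_zero, Matrix.one_apply, necklaceLaw_zero]
  | succ t ih =>
    rw [pow_succ, Matrix.mul_apply]
    simp only [ih]
    exact necklaceLaw_succ hn hb hB t s

end Necklace

theorem stmt6_general (n b : ℕ) (hn : 0 < n) (hb : 0 < b)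
    (B : Matrix (Fin (b + 1)) (Fin (b + 1)) ℝ) (hB : IsBead b B)
    (r : ℕ → Bool) (m : ℕ) (hm : m = Rcount r n)
    (i : ℕ) (hi : i < n) (hri : r i = true) (k : Fin b) (t : ℕ) :
    (necklace n b B r ^ t) (⟨⟨0, hn⟩, ⟨0, hb⟩⟩) (⟨⟨i, hi⟩, k⟩) =
      ∑' a : ℕ, (B ^ a) 0 k.castSucc *
        ∑' j : ℕ, probZ (fpt b B) (m * j + Rcount r i)
          ((t : ℤ) - (a : ℤ) - (i : ℤ) + (Rcount r i : ℤ) - ((n : ℤ) - (m : ℤ)) * (j : ℤ)) := by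
  subst hm
  simp only [← necklaceArrival_eq_tsum hi]
  rw [necklace_pow_apply hn hb hB.2.1, necklaceLaw, if_pos hri]
  exact (tsum_eq_sum fun a ha => by
    rw [necklaceArrival_of_neg fpt_zero _ (by simp at ha; omega), mul_zero]).symm

/-- Proposition 2.2, second case: if `s_{i,k}` is a state in a bead at position `i ≠ 0`,
then `P_{n,m}^t(s_0,s_{i,k}) = Σ_{a≥0} B^a(0,k) Σ_{j≥0} P[S_{mj+R_i} = t − a − i + R_i − (n−m)j]`. -/
theorem stmt6 (n b : ℕ) (hn : 0 < n) (hb : 0 < b)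
    (B : Matrix (Fin (b + 1)) (Fin (b + 1)) ℝ) (hB : IsBead b B)
    (r : ℕ → Bool) (m : ℕ) (hm : m = Rcount r n) (hm1 : 1 ≤ m)
    (i : ℕ) (hi : i < n) (hi0 : i ≠ 0) (hri : r i = true) (k : Fin b) (t : ℕ) :
    (necklace n b B r ^ t) (⟨⟨0, hn⟩, ⟨0, hb⟩⟩) (⟨⟨i, hi⟩, k⟩) =
      ∑' a : ℕ, (B ^ a) 0 k.castSucc *
        ∑' j : ℕ, probZ (fpt b B) (m * j + Rcount r i)
          ((t : ℤ) - (a : ℤ) - (i : ℤ) + (Rcount r i : ℤ) - ((n : ℤ) - (m : ℤ)) * (j : ℤ)) :=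
  stmt6_general n b hn hb B hB r m hm i hi hri k t
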